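/- arXiv:1711.03593 — 4 statements merged into one kernel-verified Lean document; each statement's English description precedes it below -/
import Mathlib

section
/- Let 0 < a₁ < a₂ and 0 < b₁ < b₂, and let Δ = {(u,v) : v > 0, a₁ ≤ u/v ≤ a₂, b₁ ≤ v ≤ b₂} be a trapezium in the Euclidean upper half-plane. Then Ψ(Δ) = {(x,y) ∈ ℍ : a₁ ≤ x ≤ a₂, b₂⁻² ≤ y ≤ b₁⁻²}, where Ψ(u,v) = (u/v, v⁻²), and the Euclidean area of Δ equals (a₂−a₁)(b₂²−b₁²)/2, which is half the hyperbolic area of Ψ(Δ). -/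
/-! Ψ sends the rays `u / v = a` to the vertical lines `x = a` and the horizontal lines `v = b`
to the horizontal lines `y = b⁻²`, so the trapezium goes onto a rectangle. Slicing Δ horizontally,
its area is `∫_{b₁}^{b₂} (a₂ - a₁) v dv`; the hyperbolic area of the rectangle is
`(a₂ - a₁) ∫ y⁻² dy` over `[b₂⁻², b₁⁻²]`, i.e. `(a₂ - a₁)(b₂² - b₁²)`. -/

open MeasureTheory Set

noncomputable def Psi : ℝ × ℝ → ℝ × ℝ := fun p => (p.1 / p.2, (p.2 ^ 2)⁻¹)

def trapezium (a₁ a₂ b₁ b₂ : ℝ) : Set (ℝ × ℝ) :=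
  {p | 0 < p.2 ∧ a₁ ≤ p.1 / p.2 ∧ p.1 / p.2 ≤ a₂ ∧ b₁ ≤ p.2 ∧ p.2 ≤ b₂}

lemma setOf_le_and_le_eq_Icc_prod_Icc (a b c d : ℝ) :
    {q : ℝ × ℝ | a ≤ q.1 ∧ q.1 ≤ b ∧ c ≤ q.2 ∧ q.2 ≤ d} = Icc a b ×ˢ Icc c d := by
  ext q
  simp only [mem_ofPred_eq, mem_prod, mem_Icc, and_assoc]

lemma le_iff_inv_sq_le_inv_sq {b v : ℝ} (hb : 0 < b) (hv : 0 < v) :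
    b ≤ v ↔ (v ^ 2)⁻¹ ≤ (b ^ 2)⁻¹ := by
  rw [inv_le_inv₀ (by positivity) (by positivity)]
  exact (pow_le_pow_iff_left₀ hb.le hv.le two_ne_zero).symm

lemma image_Psi_trapezium {a₁ a₂ b₁ b₂ : ℝ} (hb₁ : 0 < b₁) (hb : b₁ ≤ b₂) :
    Psi '' trapezium a₁ a₂ b₁ b₂ = Icc a₁ a₂ ×ˢ Icc (b₂ ^ 2)⁻¹ (b₁ ^ 2)⁻¹ := by
  have hb₂ : 0 < b₂ := hb₁.trans_le hb
  ext ⟨x, y⟩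
  simp only [trapezium, Psi, mem_image, mem_ofPred_eq, mem_prod, mem_Icc, Prod.mk.injEq,
    Prod.exists]
  constructor
  · rintro ⟨u, v, ⟨hv, hu₁, hu₂, hv₁, hv₂⟩, rfl, rfl⟩
    exact ⟨⟨hu₁, hu₂⟩, (le_iff_inv_sq_le_inv_sq hv hb₂).1 hv₂,
      (le_iff_inv_sq_le_inv_sq hb₁ hv).1 hv₁⟩
  · rintro ⟨⟨hx₁, hx₂⟩, hy₁, hy₂⟩
    have hy : 0 < y := lt_of_lt_of_le (by positivity) hy₁
    -- the inverse of `Psi` on `{v > 0}` is `(x, y) ↦ (x / √y, 1 / √y)`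
    set v := (√y)⁻¹
    have hv : 0 < v := inv_pos.2 (Real.sqrt_pos.2 hy)
    have hv_sq : (v ^ 2)⁻¹ = y := by rw [inv_pow, Real.sq_sqrt hy.le, inv_inv]
    have hxv : x * v / v = x := mul_div_cancel_right₀ x hv.ne'
    refine ⟨x * v, v, ⟨hv, ?_, ?_, ?_, ?_⟩, hxv, hv_sq⟩
    · rwa [hxv]
    · rwa [hxv]
    · rwa [le_iff_inv_sq_le_inv_sq hb₁ hv, hv_sq]
    · rwa [le_iff_inv_sq_le_inv_sq hv hb₂, hv_sq]

lemma trapezium_eq {a₁ a₂ b₁ b₂ : ℝ} (hb₁ : 0 < b₁) :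
    trapezium a₁ a₂ b₁ b₂ = {p | p.2 ∈ Icc b₁ b₂ ∧ p.1 ∈ Icc (a₁ * p.2) (a₂ * p.2)} := by
  ext ⟨u, v⟩
  simp only [trapezium, mem_ofPred_eq, mem_Icc]
  constructor
  · rintro ⟨hv, hu₁, hu₂, hv₁, hv₂⟩
    exact ⟨⟨hv₁, hv₂⟩, (le_div_iff₀ hv).1 hu₁, (div_le_iff₀ hv).1 hu₂⟩
  · rintro ⟨⟨hv₁, hv₂⟩, hu₁, hu₂⟩
    have hv : 0 < v := hb₁.trans_le hv₁
    exact ⟨hv, (le_div_iff₀ hv).2 hu₁, (div_le_iff₀ hv).2 hu₂, hv₁, hv₂⟩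

lemma volume_setOf_snd_mem_fst_mem_Icc {f g : ℝ → ℝ} {s : Set ℝ} (hf : Measurable f)
    (hg : Measurable g) (hs : MeasurableSet s) :
    volume {p : ℝ × ℝ | p.2 ∈ s ∧ p.1 ∈ Icc (f p.2) (g p.2)} =
      ∫⁻ v in s, ENNReal.ofReal (g v - f v) := by
  have hmeas : MeasurableSet {p : ℝ × ℝ | p.2 ∈ s ∧ p.1 ∈ Icc (f p.2) (g p.2)} :=
    (measurableSet_region_between_cc hf hg hs).preimage measurable_swap
  rw [Measure.volume_eq_prod, Measure.prod_apply_symm hmeas, ← lintegral_indicator hs]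
  congr 1 with v
  by_cases hv : v ∈ s
  · simp only [mem_Icc, preimage_ofPred_eq, hv, true_and, indicator_of_mem]
    exact Real.volume_Icc
  · simp [hv]

lemma volume_trapezium {a₁ a₂ b₁ b₂ : ℝ} (ha : a₁ ≤ a₂) (hb₁ : 0 < b₁) (hb : b₁ ≤ b₂) :
    volume (trapezium a₁ a₂ b₁ b₂) = ENNReal.ofReal ((a₂ - a₁) * (b₂ ^ 2 - b₁ ^ 2) / 2) := by
  rw [trapezium_eq hb₁, volume_setOf_snd_mem_fst_mem_Icc (by fun_prop) (by fun_prop)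
    measurableSet_Icc, ← ofReal_integral_eq_lintegral_ofReal]
  · rw [integral_Icc_eq_integral_Ioc, ← intervalIntegral.integral_of_le hb]
    simp only [← sub_mul]
    rw [intervalIntegral.integral_const_mul, integral_id, mul_div_assoc]
  · exact Continuous.integrableOn_Icc (by fun_prop)
  · filter_upwards [self_mem_ae_restrict measurableSet_Icc] with v hv
    have hv₀ : 0 ≤ v := hb₁.le.trans hv.1
    simp only [Pi.zero_apply, ← sub_mul]
    exact mul_nonneg (sub_nonneg.2 ha) hv₀

lemma integral_inv_sq {s t : ℝ} (hs : 0 < s) (ht : 0 < t) :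
    ∫ y in s..t, (y ^ 2)⁻¹ = s⁻¹ - t⁻¹ := by
  have h0 : (0 : ℝ) ∉ uIcc s t := fun h => (lt_min hs ht).not_ge h.1
  have := integral_zpow (a := s) (b := t) (n := -2) (Or.inr ⟨by decide, h0⟩)
  simp only [zpow_neg, zpow_ofNat] at this
  rw [this]
  norm_num
  ring

lemma setIntegral_Icc_prod_fun_snd {a₁ a₂ : ℝ} (ha : a₁ ≤ a₂) (t : Set ℝ) (h : ℝ → ℝ) :
    ∫ q in Icc a₁ a₂ ×ˢ t, h q.2 = (a₂ - a₁) * ∫ y in t, h y := by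
  rw [Measure.volume_eq_prod, ← Measure.prod_restrict, integral_fun_snd,
    measureReal_restrict_apply_univ, Real.volume_real_Icc_of_le ha, smul_eq_mul]

theorem stmt_5_general (a₁ a₂ b₁ b₂ : ℝ) (ha : a₁ < a₂)
    (hb₁ : 0 < b₁) (hb : b₁ < b₂) :
    (Psi '' {p : ℝ × ℝ | 0 < p.2 ∧ a₁ ≤ p.1 / p.2 ∧ p.1 / p.2 ≤ a₂ ∧
        b₁ ≤ p.2 ∧ p.2 ≤ b₂} =
      {q : ℝ × ℝ | a₁ ≤ q.1 ∧ q.1 ≤ a₂ ∧ (b₂ ^ 2)⁻¹ ≤ q.2 ∧ q.2 ≤ (b₁ ^ 2)⁻¹}) ∧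
    volume {p : ℝ × ℝ | 0 < p.2 ∧ a₁ ≤ p.1 / p.2 ∧ p.1 / p.2 ≤ a₂ ∧
        b₁ ≤ p.2 ∧ p.2 ≤ b₂} =
      ENNReal.ofReal ((a₂ - a₁) * (b₂ ^ 2 - b₁ ^ 2) / 2) ∧
    (∫ q in {q : ℝ × ℝ | a₁ ≤ q.1 ∧ q.1 ≤ a₂ ∧ (b₂ ^ 2)⁻¹ ≤ q.2 ∧ q.2 ≤ (b₁ ^ 2)⁻¹},
        (q.2 ^ 2)⁻¹ ∂volume) = (a₂ - a₁) * (b₂ ^ 2 - b₁ ^ 2) := by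
  have hb₂ : 0 < b₂ := hb₁.trans hb
  rw [setOf_le_and_le_eq_Icc_prod_Icc]
  refine ⟨image_Psi_trapezium hb₁ hb.le, volume_trapezium ha.le hb₁ hb.le, ?_⟩
  have hinv : (b₂ ^ 2)⁻¹ ≤ (b₁ ^ 2)⁻¹ := (le_iff_inv_sq_le_inv_sq hb₁ hb₂).1 hb.le
  rw [setIntegral_Icc_prod_fun_snd ha.le _ fun y => (y ^ 2)⁻¹, integral_Icc_eq_integral_Ioc,
    ← intervalIntegral.integral_of_le hinv, integral_inv_sq (by positivity) (by positivity),
    inv_inv, inv_inv]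

theorem stmt_5 (a₁ a₂ b₁ b₂ : ℝ) (ha₁ : 0 < a₁) (ha : a₁ < a₂)
    (hb₁ : 0 < b₁) (hb : b₁ < b₂) :
    (Psi '' {p : ℝ × ℝ | 0 < p.2 ∧ a₁ ≤ p.1 / p.2 ∧ p.1 / p.2 ≤ a₂ ∧
        b₁ ≤ p.2 ∧ p.2 ≤ b₂} =
      {q : ℝ × ℝ | a₁ ≤ q.1 ∧ q.1 ≤ a₂ ∧ (b₂ ^ 2)⁻¹ ≤ q.2 ∧ q.2 ≤ (b₁ ^ 2)⁻¹}) ∧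
    volume {p : ℝ × ℝ | 0 < p.2 ∧ a₁ ≤ p.1 / p.2 ∧ p.1 / p.2 ≤ a₂ ∧
        b₁ ≤ p.2 ∧ p.2 ≤ b₂} =
      ENNReal.ofReal ((a₂ - a₁) * (b₂ ^ 2 - b₁ ^ 2) / 2) ∧
    (∫ q in {q : ℝ × ℝ | a₁ ≤ q.1 ∧ q.1 ≤ a₂ ∧ (b₂ ^ 2)⁻¹ ≤ q.2 ∧ q.2 ≤ (b₁ ^ 2)⁻¹},
        (q.2 ^ 2)⁻¹ ∂volume) = (a₂ - a₁) * (b₂ ^ 2 - b₁ ^ 2) :=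
  stmt_5_general a₁ a₂ b₁ b₂ ha hb₁ hb
end

section
/- (Mertens-type estimate) Fix 0 < α₁ < α₂ ≤ 1. For ℓ > 2 let τ(ℓ) = {(u,v) : 0 < v ≤ ℓ, α₁ ≤ u/v ≤ α₂} and let N(ℓ) be the number of lattice points (a,b) ∈ ℤ₊ × ℤ₊ with gcd(a,b) = 1 contained in τ(ℓ). Then N(ℓ) = (6/π²)·A(ℓ) + O(ℓ log ℓ) as ℓ → ∞, where A(ℓ) = (α₂−α₁)ℓ²/2 is the Euclidean area of τ(ℓ); explicitly |N(ℓ) − (6/π²)A(ℓ)| ≤ 24 ℓ log ℓ for all ℓ ≥ 2. -/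
/-!
Möbius inversion over `gcd(a, b)` gives `N(ℓ) = ∑_{d ≤ ℓ} μ(d) T(ℓ/d)`, where `T(x)` counts all
lattice points of `τ(x)`: the points of `τ(x)` with both coordinates divisible by `d` are exactly
`d • τ(x/d)`. Counting column by column, `T(x) = (α₂ - α₁) x² / 2 + O(x)`. Summed against `μ(d)`
the errors cost `O(ℓ log ℓ)` through the harmonic sum, while the main terms add up to
`A(ℓ) ∑_{d ≤ ℓ} μ(d)/d²`, which is `(6/π²) A(ℓ) + O(ℓ)` because `∑ μ(d)/d² = 1/ζ(2)` and the tail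
beyond `ℓ` is at most `∑_{d > ℓ} 1/d² = O(1/ℓ)`.
-/

open Finset Real ArithmeticFunction
open scoped ArithmeticFunction.Moebius ArithmeticFunction.zeta

/-- `latticeCount α₁ α₂ ℓ` is the number of coprime positive integer lattice
points `(a,b)` with `b ≤ ℓ` and `α₁ ≤ a/b ≤ α₂`, i.e. in the triangle `τ(ℓ)`. -/
noncomputable def latticeCount (α₁ α₂ ℓ : ℝ) : ℕ :=
  Set.ncard {p : ℕ × ℕ | 0 < p.1 ∧ 0 < p.2 ∧ Nat.gcd p.1 p.2 = 1 ∧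
    (p.2 : ℝ) ≤ ℓ ∧ α₁ ≤ (p.1 : ℝ) / p.2 ∧ (p.1 : ℝ) / p.2 ≤ α₂}

theorem sum_divisors_moebius (n : ℕ) : ∑ d ∈ n.divisors, μ d = if n = 1 then 1 else 0 := by
  rw [← coe_mul_zeta_apply, moebius_mul_coe_zeta, one_apply]

theorem filter_dvd_Icc_eq_divisors {n L : ℕ} (hn : n ≠ 0) (hnL : n ≤ L) :
    {d ∈ Icc 1 L | d ∣ n} = n.divisors := by
  ext d
  simp only [mem_filter, mem_Icc, Nat.mem_divisors]
  constructor
  · rintro ⟨-, hd⟩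
    exact ⟨hd, hn⟩
  · rintro ⟨hd, -⟩
    exact ⟨⟨Nat.pos_of_dvd_of_pos hd (Nat.pos_of_ne_zero hn), (Nat.le_of_dvd
      (Nat.pos_of_ne_zero hn) hd).trans hnL⟩, hd⟩

theorem card_filter_eq_one_eq_sum_moebius {ι : Type*} (s : Finset ι) (f : ι → ℕ) {L : ℕ}
    (hf : ∀ i ∈ s, f i ≠ 0 ∧ f i ≤ L) :
    (#{i ∈ s | f i = 1} : ℤ) = ∑ d ∈ Icc 1 L, μ d * #{i ∈ s | d ∣ f i} := by
  calc (#{i ∈ s | f i = 1} : ℤ) = ∑ i ∈ s, ∑ d ∈ Icc 1 L, if d ∣ f i then μ d else 0 := by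
        rw [natCast_card_filter]
        refine sum_congr rfl fun i hi => ?_
        rw [← sum_filter, filter_dvd_Icc_eq_divisors (hf i hi).1 (hf i hi).2, sum_divisors_moebius]
    _ = ∑ d ∈ Icc 1 L, μ d * #{i ∈ s | d ∣ f i} := by
        rw [sum_comm]
        refine sum_congr rfl fun d _ => ?_
        rw [natCast_card_filter, mul_sum]
        simp only [mul_ite, mul_one, mul_zero]

theorem abs_card_Icc_ceil_floor_sub_le {x y : ℝ} (hx : 0 ≤ x) (hxy : x ≤ y) :
    |(#(Icc ⌈x⌉₊ ⌊y⌋₊) : ℝ) - (y - x)| ≤ 1 := by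
  have hceil : ⌈x⌉₊ ≤ ⌊y⌋₊ + 1 := Nat.ceil_le.mpr (by push_cast; linarith [Nat.lt_floor_add_one y])
  rw [Nat.card_Icc, Nat.cast_sub hceil, abs_le]
  push_cast
  constructor <;> linarith [Nat.le_ceil x, Nat.ceil_lt_add_one hx, Nat.floor_le (hx.trans hxy),
    Nat.lt_floor_add_one y]

theorem sum_Icc_one_natCast_eq (n : ℕ) : ∑ b ∈ Icc 1 n, (b : ℝ) = n * (n + 1) / 2 := by
  induction n with
  | zero => simp
  | succ n ih =>
    rw [sum_Icc_succ_top (by omega), ih]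
    push_cast
    ring

/-- The lattice points of `τ(x)`, coprime or not. -/
noncomputable def trianglePoints (α₁ α₂ x : ℝ) : Finset (ℕ × ℕ) :=
  {p ∈ Icc 1 ⌊α₂ * x⌋₊ ×ˢ Icc 1 ⌊x⌋₊ | α₁ ≤ (p.1 : ℝ) / p.2 ∧ (p.1 : ℝ) / p.2 ≤ α₂}

section trianglePoints

variable {α₁ α₂ x : ℝ}

theorem mem_trianglePoints {p : ℕ × ℕ} :
    p ∈ trianglePoints α₁ α₂ x ↔
      0 < p.1 ∧ 0 < p.2 ∧ (p.2 : ℝ) ≤ x ∧ α₁ ≤ (p.1 : ℝ) / p.2 ∧ (p.1 : ℝ) / p.2 ≤ α₂ := by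
  obtain ⟨a, b⟩ := p
  simp only [trianglePoints, mem_filter, mem_product, mem_Icc, Nat.one_le_iff_ne_zero,
    Nat.pos_iff_ne_zero]
  constructor
  · rintro ⟨⟨⟨ha, -⟩, hb, hbx⟩, hratio⟩
    exact ⟨ha, hb, (Nat.le_floor_iff' hb).mp hbx, hratio⟩
  · rintro ⟨ha, hb, hbx, hlo, hhi⟩
    have hb' : (0 : ℝ) < b := by positivity
    have hα₂ : 0 ≤ α₂ := (div_nonneg a.cast_nonneg b.cast_nonneg).trans hhi
    have hax : (a : ℝ) ≤ α₂ * x :=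
      calc (a : ℝ) ≤ α₂ * b := (div_le_iff₀ hb').mp hhi
        _ ≤ α₂ * x := by gcongr
    exact ⟨⟨⟨ha, (Nat.le_floor_iff' ha).mpr hax⟩, hb, (Nat.le_floor_iff' hb).mpr hbx⟩, hlo, hhi⟩

theorem latticeCount_eq_card_filter :
    latticeCount α₁ α₂ x = #{p ∈ trianglePoints α₁ α₂ x | Nat.gcd p.1 p.2 = 1} := by
  rw [latticeCount, ← Set.ncard_coe_finset]
  congr 1
  ext p
  rw [mem_coe, mem_filter, mem_trianglePoints]
  exact ⟨fun ⟨ha, hb, hg, h⟩ => ⟨⟨ha, hb, h⟩, hg⟩, fun ⟨⟨ha, hb, h⟩, hg⟩ => ⟨ha, hb, hg, h⟩⟩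

theorem mul_mem_trianglePoints_iff {d : ℕ} (hd : d ≠ 0) {a b : ℕ} :
    (d * a, d * b) ∈ trianglePoints α₁ α₂ x ↔ (a, b) ∈ trianglePoints α₁ α₂ (x / d) := by
  have hd' : (0 : ℝ) < d := by positivity
  simp only [mem_trianglePoints, Nat.cast_mul, mul_div_mul_left _ _ hd'.ne', le_div_iff₀' hd',
    Nat.pos_iff_ne_zero, mul_ne_zero_iff, ne_eq, hd, not_false_eq_true, true_and]

theorem card_filter_dvd_gcd_trianglePoints {d : ℕ} (hd : d ≠ 0) :
    #{p ∈ trianglePoints α₁ α₂ x | d ∣ Nat.gcd p.1 p.2} = #(trianglePoints α₁ α₂ (x / d)) := by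
  symm
  refine card_nbij' (fun p => (d * p.1, d * p.2)) (fun p => (p.1 / d, p.2 / d)) ?_ ?_ ?_ ?_
  · rintro ⟨a, b⟩ h
    simp only [mem_coe, mem_filter] at h ⊢
    exact ⟨(mul_mem_trianglePoints_iff hd).mpr h,
      Nat.dvd_gcd (dvd_mul_right d a) (dvd_mul_right d b)⟩
  · rintro ⟨a, b⟩ h
    simp only [mem_coe, mem_filter, Nat.dvd_gcd_iff] at h ⊢
    obtain ⟨h, ⟨a, rfl⟩, ⟨b, rfl⟩⟩ := h
    simpa only [Nat.mul_div_cancel_left _ (Nat.pos_of_ne_zero hd)] using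
      (mul_mem_trianglePoints_iff hd).mp h
  · rintro ⟨a, b⟩ -
    simp only [Nat.mul_div_cancel_left _ (Nat.pos_of_ne_zero hd)]
  · rintro ⟨a, b⟩ h
    simp only [mem_coe, mem_filter, Nat.dvd_gcd_iff] at h
    simp only [Nat.mul_div_cancel' h.2.1, Nat.mul_div_cancel' h.2.2]

theorem latticeCount_eq_sum_moebius :
    (latticeCount α₁ α₂ x : ℝ) = ∑ d ∈ Icc 1 ⌊x⌋₊, (μ d : ℝ) * #(trianglePoints α₁ α₂ (x / d)) := by
  have hgcd : ∀ p ∈ trianglePoints α₁ α₂ x, Nat.gcd p.1 p.2 ≠ 0 ∧ Nat.gcd p.1 p.2 ≤ ⌊x⌋₊ := by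
    intro p hp
    obtain ⟨-, hb, hbx, -⟩ := mem_trianglePoints.mp hp
    exact ⟨Nat.gcd_ne_zero_right hb.ne', (Nat.gcd_le_right _ hb).trans (Nat.le_floor hbx)⟩
  have h := card_filter_eq_one_eq_sum_moebius _ _ hgcd
  rw [sum_congr rfl fun d hd => by
    rw [card_filter_dvd_gcd_trianglePoints (by simp at hd; omega)]] at h
  rw [latticeCount_eq_card_filter]
  exact_mod_cast h

theorem card_trianglePoints_eq_sum (h1 : 0 < α₁) :
    #(trianglePoints α₁ α₂ x) = ∑ b ∈ Icc 1 ⌊x⌋₊, #(Icc ⌈α₁ * b⌉₊ ⌊α₂ * b⌋₊) := by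
  rw [trianglePoints, card_filter, sum_product_right]
  refine sum_congr rfl fun b hb => ?_
  rw [← card_filter]
  congr 1
  ext a
  obtain ⟨hb1, hbx⟩ := mem_Icc.mp hb
  have hb' : (0 : ℝ) < b := Nat.cast_pos.mpr hb1
  replace hbx : (b : ℝ) ≤ x := (Nat.le_floor_iff' (by omega)).mp hbx
  simp only [mem_filter, mem_Icc, le_div_iff₀ hb', div_le_iff₀ hb', Nat.ceil_le, Nat.one_le_iff_ne_zero]
  constructor
  · rintro ⟨-, hlo, hhi⟩
    exact ⟨by linarith, Nat.le_floor hhi⟩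
  · rintro ⟨hlo, hhi⟩
    have ha : a ≠ 0 := (Nat.cast_pos.mp ((mul_pos h1 hb').trans_le hlo)).ne'
    have hhi := (Nat.le_floor_iff' ha).mp hhi
    have hα₂ : 0 ≤ α₂ := by nlinarith
    refine ⟨⟨ha, Nat.le_floor ?_⟩, hlo, hhi⟩
    calc (a : ℝ) ≤ α₂ * b := hhi
      _ ≤ α₂ * x := by gcongr

theorem abs_card_trianglePoints_sub_le (h1 : 0 < α₁) (h12 : α₁ ≤ α₂) (hx : 0 ≤ x) :
    |(#(trianglePoints α₁ α₂ x) : ℝ) - (α₂ - α₁) / 2 * x ^ 2| ≤ (1 + (α₂ - α₁) / 2) * x := by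
  set N := ⌊x⌋₊
  have hcols : |(#(trianglePoints α₁ α₂ x) : ℝ) - (α₂ - α₁) * (N * (N + 1) / 2)| ≤ N := by
    rw [card_trianglePoints_eq_sum h1, ← sum_Icc_one_natCast_eq, mul_sum]
    push_cast
    rw [← sum_sub_distrib]
    refine (abs_sum_le_sum_abs _ _).trans ?_
    calc ∑ b ∈ Icc 1 N, |(#(Icc ⌈α₁ * b⌉₊ ⌊α₂ * b⌋₊) : ℝ) - (α₂ - α₁) * b|
        ≤ ∑ b ∈ Icc 1 N, (1 : ℝ) := sum_le_sum fun b _ => by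
          rw [sub_mul]
          exact abs_card_Icc_ceil_floor_sub_le (by positivity) (by gcongr)
      _ = N := by simp
  have hN : |(N : ℝ) * (N + 1) - x ^ 2| ≤ x := by
    have := Nat.floor_le hx
    have := Nat.lt_floor_add_one x
    rw [abs_le]
    constructor <;> nlinarith
  have hδ : 0 ≤ α₂ - α₁ := by linarith
  calc |(#(trianglePoints α₁ α₂ x) : ℝ) - (α₂ - α₁) / 2 * x ^ 2|
      = |((#(trianglePoints α₁ α₂ x) : ℝ) - (α₂ - α₁) * (N * (N + 1) / 2))
          + (α₂ - α₁) / 2 * ((N : ℝ) * (N + 1) - x ^ 2)| := by ring_nf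
    _ ≤ N + (α₂ - α₁) / 2 * x := by
        refine (abs_add_le _ _).trans (add_le_add hcols ?_)
        rw [abs_mul, abs_of_nonneg (by positivity)]
        gcongr
    _ ≤ (1 + (α₂ - α₁) / 2) * x := by linarith [Nat.floor_le hx]

end trianglePoints

theorem hasSum_moebius_div_sq :
    HasSum (fun n : ℕ => (μ n : ℝ) / n ^ 2) (6 / π ^ 2) := by
  have hs : 1 < (2 : ℂ).re := by norm_num
  have hL : LSeries (fun n => (μ n : ℂ)) 2 = ((6 / π ^ 2 : ℝ) : ℂ) := by
    have h := LSeries_zeta_mul_Lseries_moebius hs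
    rw [LSeries_zeta_eq_riemannZeta hs, riemannZeta_two] at h
    have hπ : (π : ℂ) ≠ 0 := Complex.ofReal_ne_zero.mpr pi_ne_zero
    push_cast
    field_simp at h ⊢
    linear_combination h
  rw [← Complex.hasSum_ofReal, ← hL]
  have h : HasSum (LSeries.term (fun n => (μ n : ℂ)) 2) _ :=
    (LSeriesSummable_moebius_iff.mpr hs).LSeriesHasSum
  convert h using 1
  funext n
  rcases eq_or_ne n 0 with rfl | hn
  · simp
  · simp [LSeries.term_of_ne_zero hn]

theorem abs_sum_moebius_div_sq_sub_le (L : ℕ) :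
    |∑ d ∈ Icc 1 L, (μ d : ℝ) / d ^ 2 - 6 / π ^ 2| ≤ 2 / ((L : ℝ) + 1) := by
  set f : ℕ → ℝ := fun n => (μ n : ℝ) / n ^ 2
  have hrange : ∑ d ∈ Icc 1 L, f d = ∑ d ∈ range (L + 1), f d := by
    rw [range_eq_Ico, Ico_add_one_right_eq_Icc, ← sum_Ioc_add_eq_sum_Icc L.zero_le,
      ← Icc_add_one_left_eq_Ioc, zero_add]
    simp [f]
  have hf : ∀ n, ‖f n‖ ≤ ((n : ℝ) ^ 2)⁻¹ := fun n => by
    rw [Real.norm_eq_abs, abs_div, abs_pow, Nat.abs_cast, div_eq_mul_inv]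
    exact mul_le_of_le_one_left (by positivity) (by exact_mod_cast abs_moebius_le_one)
  have hinv : Summable fun n : ℕ => ((n : ℝ) ^ 2)⁻¹ := by
    simpa only [one_div] using Real.summable_one_div_nat_pow.mpr one_lt_two
  have htail := (summable_nat_add_iff (L + 1)).mpr hinv
  have hsplit := hasSum_moebius_div_sq.summable.sum_add_tsum_nat_add (L + 1)
  rw [hasSum_moebius_div_sq.tsum_eq] at hsplit
  rw [hrange, ← hsplit, sub_add_cancel_left, abs_neg, ← Real.norm_eq_abs]
  have hfs : Summable fun i => ‖f (i + (L + 1))‖ :=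
    ((summable_nat_add_iff (L + 1)).mpr hasSum_moebius_div_sq.summable).norm
  calc ‖∑' i, f (i + (L + 1))‖ ≤ ∑' i, ‖f (i + (L + 1))‖ := norm_tsum_le_tsum_norm hfs
    _ ≤ ∑' i, (((i + (L + 1) : ℕ) : ℝ) ^ 2)⁻¹ :=
        hfs.tsum_le_tsum (fun i => hf (i + (L + 1))) htail
    _ ≤ 2 / (L + 1) := by
        refine htail.tsum_le_of_sum_range_le fun n => ?_
        have h := sum_Ioo_inv_sq_le (α := ℝ) L (L + 1 + n)
        rw [← Ico_add_one_left_eq_Ioo, sum_Ico_eq_sum_range, Nat.add_sub_cancel_left] at h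
        simpa only [add_comm] using h

theorem abs_sum_moebius_mul_sub_le {f : ℝ → ℝ} {c K ℓ : ℝ} (hc : 0 ≤ c) (hℓ : 1 ≤ ℓ)
    (hf : ∀ x, 0 ≤ x → |f x - c * x ^ 2| ≤ K * x) :
    |∑ d ∈ Icc 1 ⌊ℓ⌋₊, (μ d : ℝ) * f (ℓ / d) - 6 / π ^ 2 * (c * ℓ ^ 2)| ≤
      K * ℓ * (1 + log ℓ) + c * ℓ ^ 2 * (2 / (⌊ℓ⌋₊ + 1)) := by
  set L := ⌊ℓ⌋₊
  have hsplit : ∑ d ∈ Icc 1 L, (μ d : ℝ) * f (ℓ / d) - 6 / π ^ 2 * (c * ℓ ^ 2) =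
      ∑ d ∈ Icc 1 L, (μ d : ℝ) * (f (ℓ / d) - c * (ℓ / d) ^ 2) +
        c * ℓ ^ 2 * (∑ d ∈ Icc 1 L, (μ d : ℝ) / d ^ 2 - 6 / π ^ 2) := by
    have h : ∀ d : ℕ, (μ d : ℝ) * (c * (ℓ / d) ^ 2) = c * ℓ ^ 2 * ((μ d : ℝ) / d ^ 2) := by
      intro d
      rw [div_pow]
      ring
    simp only [mul_sub, sum_sub_distrib, h, ← mul_sum]
    ring
  have hKℓ : 0 ≤ K * ℓ := (abs_nonneg _).trans (hf ℓ (by linarith))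
  have hL : (0 : ℝ) < L := Nat.cast_pos.mpr (Nat.floor_pos.mpr hℓ)
  have hmain : |∑ d ∈ Icc 1 L, (μ d : ℝ) * (f (ℓ / d) - c * (ℓ / d) ^ 2)| ≤ K * ℓ * (1 + log ℓ) :=
    calc _ ≤ ∑ d ∈ Icc 1 L, |(μ d : ℝ) * (f (ℓ / d) - c * (ℓ / d) ^ 2)| := abs_sum_le_sum_abs _ _
      _ ≤ ∑ d ∈ Icc 1 L, K * ℓ * (d : ℝ)⁻¹ := sum_le_sum fun d _ => by
          rw [abs_mul, mul_assoc, ← div_eq_mul_inv]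
          exact (mul_le_of_le_one_left (abs_nonneg _) (by exact_mod_cast abs_moebius_le_one)).trans
            (hf _ (by positivity))
      _ = K * ℓ * harmonic L := by
          rw [← mul_sum, harmonic_eq_sum_Icc]
          push_cast
          rfl
      _ ≤ K * ℓ * (1 + log ℓ) := by
          gcongr
          exact (harmonic_le_one_add_log L).trans (by gcongr; exact Nat.floor_le (by linarith))
  have htail : |c * ℓ ^ 2 * (∑ d ∈ Icc 1 L, (μ d : ℝ) / d ^ 2 - 6 / π ^ 2)| ≤
      c * ℓ ^ 2 * (2 / (L + 1)) := by
    rw [abs_mul, abs_of_nonneg (by positivity)]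
    gcongr
    exact abs_sum_moebius_div_sq_sub_le L
  rw [hsplit]
  exact (abs_add_le _ _).trans (add_le_add hmain htail)

theorem stmt_10 (α₁ α₂ : ℝ) (h1 : 0 < α₁) (h2 : α₁ < α₂) (h3 : α₂ ≤ 1) :
    ∀ ℓ : ℝ, 2 ≤ ℓ →
      |(latticeCount α₁ α₂ ℓ : ℝ) - (6 / Real.pi ^ 2) * ((α₂ - α₁) * ℓ ^ 2 / 2)| ≤
        24 * ℓ * Real.log ℓ := by
  intro ℓ hℓ
  have hδ : 0 ≤ (α₂ - α₁) / 2 := by linarith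
  have hest := abs_sum_moebius_mul_sub_le hδ (by linarith)
    fun x hx => abs_card_trianglePoints_sub_le h1 h2.le hx
  rw [← latticeCount_eq_sum_moebius] at hest
  have htail : (α₂ - α₁) / 2 * ℓ ^ 2 * (2 / (⌊ℓ⌋₊ + 1)) ≤ ℓ :=
    calc _ = (α₂ - α₁) * ℓ * (ℓ / (⌊ℓ⌋₊ + 1)) := by ring
      _ ≤ 1 * ℓ * 1 := by
          gcongr
          · linarith
          · exact (div_le_one (by positivity)).mpr (Nat.lt_floor_add_one ℓ).le
      _ = ℓ := by ring
  have hK : (1 + (α₂ - α₁) / 2) * ℓ * (1 + log ℓ) ≤ 3 / 2 * ℓ * (1 + log ℓ) := by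
    have : 0 ≤ log ℓ := log_nonneg (by linarith)
    gcongr
    linarith
  have hlog : 0.69 ≤ log ℓ := by
    linarith [log_two_gt_d9, log_le_log two_pos hℓ]
  have hℓlog : ℓ * 0.69 ≤ ℓ * log ℓ := by gcongr
  rw [show (α₂ - α₁) * ℓ ^ 2 / 2 = (α₂ - α₁) / 2 * ℓ ^ 2 by ring]
  linarith
end

section
/- For any region R ⊂ ℝ₊² bounded by the lines v = ℓ and v = ℓ+1 and two rays through the origin of slopes 1/α₂ ≤ 1/α₁ (with 0 < α₁ < α₂ ≤ 1), the number ω(ℓ) of positive integer lattice points in τ(ℓ+1)∖τ(ℓ) satisfies |ω(ℓ) − (α₂−α₁)(2ℓ+1)/2| ≤ 3 for all ℓ > 2, where τ(r) = {(u,v) : 0 < v ≤ r, α₁ ≤ u/v ≤ α₂}. -/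
/-! Every lattice point of `τ(ℓ+1) ∖ τ(ℓ)` lies on the single row `v = n := ⌊ℓ + 1⌋₊`, where
`n ∈ (ℓ, ℓ + 1]`, and on that row it is an integer `u ∈ [α₁ n, α₂ n]`. An interval of length
`L ≥ 0` contains between `L - 1` and `L + 1` integers, so `ω(ℓ)` is within `1` of `(α₂ - α₁) n`,
which in turn is within `(α₂ - α₁) / 2 ≤ 1 / 2` of `(α₂ - α₁)(2ℓ + 1) / 2`. -/

/-- Number of positive integer lattice points in τ(ℓ+1) ∖ τ(ℓ), where
τ(r) = {(u,v) : 0 < v ≤ r, α₁ ≤ u/v ≤ α₂}. -/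
noncomputable def omegaCount (α₁ α₂ ℓ : ℝ) : ℕ :=
  Set.ncard {p : ℕ × ℕ | 0 < p.1 ∧ 0 < p.2 ∧
    α₁ ≤ (p.1 : ℝ) / p.2 ∧ (p.1 : ℝ) / p.2 ≤ α₂ ∧
    ℓ < (p.2 : ℝ) ∧ (p.2 : ℝ) ≤ ℓ + 1}

theorem setOf_natCast_mem_Icc_eq {K : Type*} [Semiring K] [PartialOrder K] [FloorSemiring K]
    {x y : K} (hy : 0 ≤ y) :
    {u : ℕ | x ≤ u ∧ (u : K) ≤ y} = ↑(Finset.Icc ⌈x⌉₊ ⌊y⌋₊) := by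
  ext u
  simp [Nat.ceil_le, Nat.le_floor_iff hy]

theorem abs_ncard_natCast_mem_Icc_sub_le {K : Type*} [CommRing K] [LinearOrder K]
    [IsStrictOrderedRing K] [FloorSemiring K] {x y : K} (hx : 0 ≤ x) (hxy : x ≤ y) :
    |({u : ℕ | x ≤ u ∧ (u : K) ≤ y}.ncard : K) - (y - x)| ≤ 1 := by
  have hy : 0 ≤ y := hx.trans hxy
  have hceil_le : ⌈x⌉₊ ≤ ⌊y⌋₊ + 1 := by
    have : (⌈x⌉₊ : K) < ⌊y⌋₊ + 2 := by
      linarith [Nat.ceil_lt_add_one hx, Nat.lt_floor_add_one y]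
    exact Nat.lt_succ_iff.mp (by exact_mod_cast this)
  rw [setOf_natCast_mem_Icc_eq hy, Set.ncard_coe_finset, Nat.card_Icc, Nat.cast_sub hceil_le,
    abs_le]
  push_cast
  constructor <;> linarith [Nat.le_ceil x, Nat.ceil_lt_add_one hx, Nat.floor_le hy,
    Nat.lt_floor_add_one y]

theorem natCast_mem_Ioc_add_one_iff {K : Type*} [Ring K] [LinearOrder K]
    [IsStrictOrderedRing K] [FloorSemiring K] {ℓ : K} (hℓ : 0 ≤ ℓ + 1) {v : ℕ} :
    (v : K) ∈ Set.Ioc ℓ (ℓ + 1) ↔ v = ⌊ℓ + 1⌋₊ := by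
  rw [eq_comm, Nat.floor_eq_iff hℓ, Set.mem_Ioc, add_lt_add_iff_right, and_comm]

theorem omegaCount_eq_ncard_row {α₁ α₂ ℓ : ℝ} (hα₁ : 0 < α₁) (hℓ : 0 ≤ ℓ) :
    omegaCount α₁ α₂ ℓ =
      {u : ℕ | α₁ * ⌊ℓ + 1⌋₊ ≤ u ∧ (u : ℝ) ≤ α₂ * ⌊ℓ + 1⌋₊}.ncard := by
  set n := ⌊ℓ + 1⌋₊
  have hn : (0 : ℝ) < n := by
    rw [Nat.cast_pos, Nat.floor_pos]
    linarith
  rw [← Set.ncard_image_of_injective _ (Prod.mk_left_injective n), omegaCount]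
  refine congrArg Set.ncard ?_
  ext ⟨u, v⟩
  simp only [Set.mem_ofPred_eq, Set.mem_image, Prod.mk.injEq]
  constructor
  · rintro ⟨-, -, hu₁, hu₂, hv₁, hv₂⟩
    obtain rfl : v = n := (natCast_mem_Ioc_add_one_iff (by linarith)).mp ⟨hv₁, hv₂⟩
    rw [le_div_iff₀ hn] at hu₁
    rw [div_le_iff₀ hn] at hu₂
    exact ⟨u, ⟨hu₁, hu₂⟩, rfl, rfl⟩
  · rintro ⟨u, ⟨hu₁, hu₂⟩, rfl, rfl⟩
    have hv := (natCast_mem_Ioc_add_one_iff (K := ℝ) (by linarith)).mpr (rfl : n = n)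
    have hu : (0 : ℝ) < u := (mul_pos hα₁ hn).trans_le hu₁
    exact ⟨by exact_mod_cast hu, by exact_mod_cast hn, (le_div_iff₀ hn).mpr hu₁,
      (div_le_iff₀ hn).mpr hu₂, hv⟩

theorem stmt_14 (α₁ α₂ : ℝ) (h1 : 0 < α₁) (h2 : α₁ < α₂) (h3 : α₂ ≤ 1) :
    ∀ ℓ : ℝ, 2 < ℓ →
      |(omegaCount α₁ α₂ ℓ : ℝ) - (α₂ - α₁) * (2 * ℓ + 1) / 2| ≤ 3 := by
  intro ℓ hℓ
  set n := ⌊ℓ + 1⌋₊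
  obtain ⟨hn₁, hn₂⟩ : (n : ℝ) ∈ Set.Ioc ℓ (ℓ + 1) :=
    (natCast_mem_Ioc_add_one_iff (by linarith)).mpr rfl
  have hrow := abs_ncard_natCast_mem_Icc_sub_le (mul_pos h1 (by linarith : (0 : ℝ) < n)).le
    (mul_le_mul_of_nonneg_right h2.le (Nat.cast_nonneg n))
  rw [abs_le] at hrow
  rw [omegaCount_eq_ncard_row h1 (by linarith), abs_le]
  constructor <;> nlinarith [hrow.1, hrow.2]
end

section
/- (Optimality of the exponent 1/2) Fix 0 < α₁ < α₂ ≤ 1 and let N(ℓ) be the number of coprime positive integer pairs (a,b) with b ≤ ℓ and α₁ ≤ a/b ≤ α₂, and A(ℓ) = (α₂−α₁)ℓ²/2. Then for every ε < 1/2, limsup_{ℓ→∞} |N(ℓ)/A(ℓ) − 6/π²| · ℓ^{3/2−ε} = ∞. -/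
/-!
For a prime `p`, every fraction `a / p` with `α₁ ≤ a / p ≤ α₂` and `a ≠ p` is already reduced, so
raising `ℓ` from `p - 1/2` to `p` adds a whole row of about `(α₂ - α₁) p` points to the count `N`,
while `A` grows only by about `(α₂ - α₁) p / 2`. Hence `N / A` cannot be within `1 / (4p)` of any
`L ≤ 1` at both `ℓ = p - 1/2` and `ℓ = p`, and `ℓ ^ (3/2 - ε) / (4p) ≳ ℓ ^ (1/2 - ε) / 8` is
unbounded. Infinitely many primes give arbitrarily large such `ℓ`.
-/

open Filter

def latticeSet (α₁ α₂ ℓ : ℝ) : Set (ℕ × ℕ) :=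
  {p | 0 < p.1 ∧ 0 < p.2 ∧ Nat.gcd p.1 p.2 = 1 ∧
    (p.2 : ℝ) ≤ ℓ ∧ α₁ ≤ (p.1 : ℝ) / p.2 ∧ (p.1 : ℝ) / p.2 ≤ α₂}

section Counting

variable {α₁ α₂ ℓ : ℝ}

theorem latticeCount_eq_ncard : latticeCount α₁ α₂ ℓ = (latticeSet α₁ α₂ ℓ).ncard := rfl

theorem latticeSet_finite (α₁ α₂ ℓ : ℝ) : (latticeSet α₁ α₂ ℓ).Finite := by
  refine ((Set.finite_Iic (⌈α₂⌉₊ * ⌊ℓ⌋₊)).prod (Set.finite_Iic ⌊ℓ⌋₊)).subset ?_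
  rintro ⟨a, b⟩ ⟨-, hb, -, hbℓ, -, haα⟩
  have hb' : b ≤ ⌊ℓ⌋₊ := Nat.le_floor hbℓ
  have hab : (a : ℝ) ≤ ⌈α₂⌉₊ * b := by
    rw [div_le_iff₀ (by exact_mod_cast hb)] at haα
    exact haα.trans (by gcongr; exact Nat.le_ceil α₂)
  have hab' : a ≤ ⌈α₂⌉₊ * b := by exact_mod_cast hab
  exact ⟨hab'.trans (Nat.mul_le_mul_left _ hb'), hb'⟩

theorem latticeSet_mono {ℓ' : ℝ} (h : ℓ ≤ ℓ') : latticeSet α₁ α₂ ℓ ⊆ latticeSet α₁ α₂ ℓ' :=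
  fun _ ⟨ha, hb, hg, hbℓ, hr⟩ => ⟨ha, hb, hg, hbℓ.trans h, hr⟩

theorem sub_sub_two_le_card_erase_Icc {x : ℝ} (y : ℝ) (hx : 0 ≤ x) (n : ℕ) :
    y - x - 2 ≤ ((Finset.Icc ⌈x⌉₊ ⌊y⌋₊).erase n).card := by
  have hcard : ⌊y⌋₊ + 1 ≤ ((Finset.Icc ⌈x⌉₊ ⌊y⌋₊).erase n).card + 1 + ⌈x⌉₊ := by
    have := Finset.pred_card_le_card_erase (s := Finset.Icc ⌈x⌉₊ ⌊y⌋₊) (a := n)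
    rw [Nat.card_Icc] at this
    omega
  have hcard' : (⌊y⌋₊ : ℝ) + 1 ≤ ((Finset.Icc ⌈x⌉₊ ⌊y⌋₊).erase n).card + 1 + ⌈x⌉₊ := by
    exact_mod_cast hcard
  linarith [Nat.sub_one_lt_floor y, Nat.ceil_lt_add_one hx]

theorem mk_mem_latticeSet_of_prime (h1 : 0 < α₁) (h3 : α₂ ≤ 1) {p a : ℕ} (hp : p.Prime)
    (ha : a ∈ (Finset.Icc ⌈α₁ * p⌉₊ ⌊α₂ * p⌋₊).erase p) : (a, p) ∈ latticeSet α₁ α₂ p := by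
  obtain ⟨hap, hαa, haα⟩ : a ≠ p ∧ ⌈α₁ * p⌉₊ ≤ a ∧ a ≤ ⌊α₂ * p⌋₊ := by
    simpa only [Finset.mem_erase, Finset.mem_Icc] using ha
  have hp0 : (0 : ℝ) < p := by exact_mod_cast hp.pos
  have ha0 : 0 < a := (Nat.ceil_pos.mpr (by positivity)).trans_le hαa
  have hαa' : α₁ * p ≤ a := Nat.ceil_le.mp hαa
  have haα' : (a : ℝ) ≤ α₂ * p := (Nat.le_floor_iff' ha0.ne').mp haα
  have hlt : a < p :=
    lt_of_le_of_ne (by exact_mod_cast haα'.trans (mul_le_of_le_one_left hp0.le h3)) hap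
  refine ⟨ha0, hp.pos, ?_, le_rfl, (le_div_iff₀ hp0).mpr hαa', (div_le_iff₀ hp0).mpr haα'⟩
  exact (hp.coprime_iff_not_dvd.mpr (Nat.not_dvd_of_pos_of_lt ha0 hlt)).symm

theorem latticeCount_sub_half_add_le (h1 : 0 < α₁) (h3 : α₂ ≤ 1) {p : ℕ} (hp : p.Prime) :
    (latticeCount α₁ α₂ (p - 1 / 2) : ℝ) + ((α₂ - α₁) * p - 2) ≤ latticeCount α₁ α₂ p := by
  set row := (Finset.Icc ⌈α₁ * p⌉₊ ⌊α₂ * p⌋₊).erase p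
  set T : Set (ℕ × ℕ) := (fun a => (a, p)) '' row
  have hT : T ⊆ latticeSet α₁ α₂ p := by
    rintro _ ⟨a, ha, rfl⟩
    exact mk_mem_latticeSet_of_prime h1 h3 hp ha
  have hdisj : Disjoint (latticeSet α₁ α₂ (p - 1 / 2)) T := by
    rw [Set.disjoint_right]
    rintro _ ⟨a, -, rfl⟩ ⟨-, -, -, hpℓ, -⟩
    linarith [hpℓ]
  have hTcard : T.ncard = row.card := by
    rw [Set.ncard_image_of_injective _ fun _ _ h => (Prod.mk.inj h).1, Set.ncard_coe_finset]
  have hcount : (latticeSet α₁ α₂ (p - 1 / 2)).ncard + row.card ≤ (latticeSet α₁ α₂ p).ncard := by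
    rw [← hTcard, ← Set.ncard_union_eq hdisj (latticeSet_finite _ _ _) (Set.toFinite T)]
    exact Set.ncard_le_ncard (Set.union_subset (latticeSet_mono (by linarith)) hT)
      (latticeSet_finite _ _ _)
  have hrow := sub_sub_two_le_card_erase_Icc (α₂ * p) (x := α₁ * p) (by positivity) p
  rw [latticeCount_eq_ncard, latticeCount_eq_ncard]
  have hcount' : ((latticeSet α₁ α₂ (p - 1 / 2)).ncard : ℝ) + row.card
      ≤ (latticeSet α₁ α₂ p).ncard := by exact_mod_cast hcount
  linarith

end Counting

section Deviation

variable {N : ℝ → ℝ} {c L p : ℝ}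

/-- Were `N ℓ / A ℓ` within `δ = 1/(4p)` of `L` at both `ℓ = p - 1/2` and `ℓ = p`, the jump of `N`
would be below `L (A p - A (p - 1/2)) + δ (A p + A (p - 1/2)) ≤ c p / 2 + c p / 4 ≤ c p - 2`. -/
theorem exists_deviation_of_jump (hc : 0 < c) (hL : L ≤ 1) (hp : 1 ≤ p) (hcp : 8 ≤ c * p)
    (hjump : N (p - 1 / 2) + (c * p - 2) ≤ N p) :
    ∃ ℓ, p - 1 / 2 ≤ ℓ ∧ 1 / (4 * p) ≤ |N ℓ / (c * ℓ ^ 2 / 2) - L| := by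
  by_contra! hsmall
  have hdev₁ := abs_lt.mp (hsmall (p - 1 / 2) le_rfl)
  have hdev₂ := abs_lt.mp (hsmall p (by linarith))
  set δ := 1 / (4 * p) with hδ
  set A₁ := c * (p - 1 / 2) ^ 2 / 2 with hA₁
  set A₂ := c * p ^ 2 / 2 with hA₂
  have hN₁ : (L - δ) * A₁ < N (p - 1 / 2) := by
    rw [← lt_div_iff₀ (by rw [hA₁]; nlinarith)]
    linarith
  have hN₂ : N p < (L + δ) * A₂ := by
    rw [← div_lt_iff₀ (by positivity)]
    linarith
  have hgrowth : L * (A₂ - A₁) ≤ c * p / 2 := by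
    have hA : A₂ - A₁ = c * (p - 1 / 4) / 2 := by ring
    rw [hA]
    calc L * (c * (p - 1 / 4) / 2) ≤ 1 * (c * (p - 1 / 4) / 2) := by gcongr; nlinarith
      _ ≤ c * p / 2 := by nlinarith
  have hslack : δ * (A₂ + A₁) ≤ c * p / 4 := by
    calc δ * (A₂ + A₁) ≤ δ * (c * p ^ 2) := by gcongr; nlinarith
      _ = c * p / 4 := by rw [hδ]; field_simp
  nlinarith

theorem lt_mul_rpow_of_inv_le {M d ℓ p ε : ℝ} (hℓ : 0 < ℓ) (hp : 0 < p) (hpℓ : p ≤ 2 * ℓ)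
    (hd : 1 / (4 * p) ≤ d) (hM : 8 * M < ℓ ^ (1 / 2 - ε)) : M < d * ℓ ^ (3 / 2 - ε) := by
  have hdℓ : 1 / 8 ≤ d * ℓ :=
    calc 1 / 8 ≤ 1 / (4 * p) * ℓ := by
          rw [div_mul_eq_mul_div, le_div_iff₀ (by positivity)]; linarith
      _ ≤ d * ℓ := by gcongr
  calc M < 1 / 8 * ℓ ^ (1 / 2 - ε) := by linarith
    _ ≤ d * ℓ * ℓ ^ (1 / 2 - ε) := by gcongr
    _ = d * ℓ ^ (3 / 2 - ε) := by
      rw [show (3 / 2 - ε) = 1 + (1 / 2 - ε) by ring, Real.rpow_add hℓ, Real.rpow_one, mul_assoc]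

end Deviation

/-- Optimality of the exponent 1/2: for every ε < 1/2 the quantity
`|N(ℓ)/A(ℓ) − 6/π²| · ℓ^(3/2−ε)` has limsup ∞ as ℓ → ∞. -/
theorem stmt_15 (α₁ α₂ : ℝ) (h1 : 0 < α₁) (h2 : α₁ < α₂) (h3 : α₂ ≤ 1)
    (ε : ℝ) (hε : ε < 1 / 2) :
    ∀ M : ℝ, ∃ᶠ ℓ : ℝ in atTop,
      M < |(latticeCount α₁ α₂ ℓ : ℝ) / ((α₂ - α₁) * ℓ ^ 2 / 2) - 6 / Real.pi ^ 2| *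
        ℓ ^ (3 / 2 - ε) := by
  intro M
  have hc : 0 < α₂ - α₁ := sub_pos.mpr h2
  have hL : 6 / Real.pi ^ 2 ≤ 1 := by
    rw [div_le_one (by positivity)]
    nlinarith [Real.pi_gt_three]
  obtain ⟨ℓ₀, hℓ₀⟩ := eventually_atTop.mp
    ((tendsto_rpow_atTop (by linarith : 0 < 1 / 2 - ε)).eventually_gt_atTop (8 * M))
  rw [frequently_atTop]
  intro a
  obtain ⟨p, hp_ge, hp⟩ := Nat.exists_infinite_primes ⌈max (max a ℓ₀) (8 / (α₂ - α₁)) + 1⌉₊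
  obtain ⟨⟨hap, hℓ₀p⟩, hcp⟩ : (a ≤ p - 1 ∧ ℓ₀ ≤ p - 1) ∧ 8 / (α₂ - α₁) ≤ p - 1 := by
    simpa only [max_le_iff] using
      le_sub_iff_add_le.mpr ((Nat.le_ceil _).trans (Nat.cast_le.mpr hp_ge))
  have hp2 : (2 : ℝ) ≤ p := by exact_mod_cast hp.two_le
  obtain ⟨ℓ, hpℓ, hdev⟩ := exists_deviation_of_jump (N := fun ℓ => (latticeCount α₁ α₂ ℓ : ℝ))
    hc hL (by linarith) ((div_le_iff₀' hc).mp (by linarith))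
    (latticeCount_sub_half_add_le h1 h3 hp)
  exact ⟨ℓ, by linarith, lt_mul_rpow_of_inv_le (by linarith) (by linarith) (by linarith) hdev
    (hℓ₀ ℓ (by linarith))⟩
end
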